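/- For paths P_n and P_m with n,m ≥ 2, F(P_n +_S P_m) = 72nm − 74n − 82m + 72. -/

import Mathlib

open SimpleGraph Finset
open scoped Classical

noncomputable section

/-- The generalized hierarchical product `G(U)ΠH`. -/
def hierProd {α β : Type*} (G : SimpleGraph α) (H : SimpleGraph β) (U : Set α) :
    SimpleGraph (α × β) where
  Adj p q := (p.1 = q.1 ∧ p.1 ∈ U ∧ H.Adj p.2 q.2) ∨ (p.2 = q.2 ∧ G.Adj p.1 q.1)
  symm := by
    constructor
    rintro p q (⟨h1, h2, h3⟩ | ⟨h1, h2⟩)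
    · exact Or.inl ⟨h1.symm, h1 ▸ h2, h3.symm⟩
    · exact Or.inr ⟨h1.symm, h2.symm⟩
  loopless := by
    constructor
    rintro p (⟨_, _, h⟩ | ⟨_, h⟩)
    · exact H.loopless.irrefl _ h
    · exact G.loopless.irrefl _ h

/-- The F-index (forgotten topological index): sum of cubes of degrees. -/
def Findex {α : Type*} [Fintype α] (G : SimpleGraph α) : ℕ :=
  ∑ v, G.degree v ^ 3

/-- The first Zagreb index: sum of squares of degrees. -/
def M1 {α : Type*} [Fintype α] (G : SimpleGraph α) : ℕ :=
  ∑ v, G.degree v ^ 2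

/-- The general first Zagreb index with exponent `n`. -/
def xiIndex {α : Type*} [Fintype α] (G : SimpleGraph α) (n : ℕ) : ℕ :=
  ∑ v, G.degree v ^ n

/-- The redefined Zagreb index `ReZG(G) = Σ_{uv∈E} d(u)d(v)(d(u)+d(v))`. -/
def ReZG {α : Type*} [Fintype α] (G : SimpleGraph α) : ℕ :=
  ∑ e ∈ G.edgeFinset,
    Sym2.lift ⟨fun u v => G.degree u * G.degree v * (G.degree u + G.degree v),
      fun u v => by ring⟩ e

/-- The subdivision graph `S(G)`: each edge replaced by a path of length two. -/
def Sgraph {α : Type*} (G : SimpleGraph α) : SimpleGraph (α ⊕ ↥G.edgeSet) where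
  Adj x y :=
    match x, y with
    | Sum.inl u, Sum.inr e => u ∈ (e : Sym2 α)
    | Sum.inr e, Sum.inl u => u ∈ (e : Sym2 α)
    | _, _ => False
  symm := by constructor; rintro (u | e) (v | f) h <;> simp_all
  loopless := by constructor; rintro (u | e) h <;> simp_all

/-- The graph on `V(G) ⊕ E(G)` whose only edges are the original edges of `G`. -/
def Ograph {α : Type*} (G : SimpleGraph α) : SimpleGraph (α ⊕ ↥G.edgeSet) where
  Adj x y :=
    match x, y with
    | Sum.inl u, Sum.inl v => G.Adj u v
    | _, _ => False
  symm := by constructor; rintro (u | e) (v | f) h <;> simp_all <;> exact h.symm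
  loopless := by constructor; rintro (u | e) h <;> simp_all

/-- The graph on `V(G) ⊕ E(G)` whose edges join pairs of adjacent edges of `G`
(line-graph adjacency). -/
def Lgraph {α : Type*} (G : SimpleGraph α) : SimpleGraph (α ⊕ ↥G.edgeSet) where
  Adj x y :=
    match x, y with
    | Sum.inr e, Sum.inr f => e ≠ f ∧ ∃ u, u ∈ (e : Sym2 α) ∧ u ∈ (f : Sym2 α)
    | _, _ => False
  symm := by
    constructor
    rintro (u | e) (v | f) h <;> simp_all
    exact ⟨Ne.symm h.1, h.2.imp fun u hu => hu.symm⟩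
  loopless := by constructor; rintro (u | e) h <;> simp_all

/-- The triangle parallel graph `R(G)`. -/
def Rgraph {α : Type*} (G : SimpleGraph α) : SimpleGraph (α ⊕ ↥G.edgeSet) :=
  Sgraph G ⊔ Ograph G

/-- The line superposition graph `Q(G)`. -/
def Qgraph {α : Type*} (G : SimpleGraph α) : SimpleGraph (α ⊕ ↥G.edgeSet) :=
  Sgraph G ⊔ Lgraph G

/-- The total graph `T(G)`. -/
def Tgraph {α : Type*} (G : SimpleGraph α) : SimpleGraph (α ⊕ ↥G.edgeSet) :=
  Sgraph G ⊔ Ograph G ⊔ Lgraph G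

/-- The F-sum `G +_F H`, where `K` is one of `S(G), R(G), Q(G), T(G)`:
the generalized hierarchical product `K(V(G))ΠH`. -/
def FSum {α β : Type*} {G : SimpleGraph α} (K : SimpleGraph (α ⊕ ↥G.edgeSet))
    (H : SimpleGraph β) : SimpleGraph ((α ⊕ ↥G.edgeSet) × β) :=
  hierProd K H (Set.range Sum.inl)

end

/-! In `G +_S H` a vertex `(u, v)` with `u ∈ V(G)` has degree `d_G(u) + d_H(v)`, and one with
`u ∈ E(G)` has degree `2`. Expanding the cube and using the handshake lemma gives
`F(G +_S H) = |V(H)| F(G) + 6|E(H)| M₁(G) + 6|E(G)| M₁(H) + |V(G)| F(H) + 8|V(H)||E(G)|`,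
and `P_n` has two vertices of degree `1`, `n - 2` of degree `2`, and `n - 1` edges. -/

section HierProd

variable {α β : Type*} [Fintype α] [Fintype β] (K : SimpleGraph α) (H : SimpleGraph β)
  (U : Set α)

lemma hierProd_neighborFinset (x : α) (v : β) :
    (hierProd K H U).neighborFinset (x, v) =
      (if x ∈ U then {x} ×ˢ H.neighborFinset v else ∅) ∪ K.neighborFinset x ×ˢ {v} := by
  ext ⟨y, w⟩
  rw [mem_neighborFinset]
  split_ifs with hx <;> simp [hierProd, hx, and_comm, eq_comm]

lemma hierProd_degree (x : α) (v : β) :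
    (hierProd K H U).degree (x, v) = (if x ∈ U then H.degree v else 0) + K.degree x := by
  have hdisj : Disjoint (if x ∈ U then {x} ×ˢ H.neighborFinset v else ∅)
      (K.neighborFinset x ×ˢ {v}) := by
    split_ifs
    · simp only [Finset.disjoint_left, mem_product, mem_singleton, mem_neighborFinset]
      rintro ⟨y, w⟩ ⟨rfl, -⟩ ⟨hy, -⟩
      exact K.irrefl hy
    · exact disjoint_empty_left _
  rw [← card_neighborFinset_eq_degree, hierProd_neighborFinset, card_union_of_disjoint hdisj]
  split_ifs <;> simp

end HierProd

section Subdivision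

variable {α : Type*} [Fintype α] (G : SimpleGraph α)

lemma Sgraph_neighborFinset_inl (u : α) :
    (Sgraph G).neighborFinset (Sum.inl u) =
      ({e : G.edgeSet | u ∈ (e : Sym2 α)} : Finset _).map Function.Embedding.inr := by
  ext (v | e) <;> rw [mem_neighborFinset] <;> simp [Sgraph]

lemma Sgraph_degree_inl (u : α) : (Sgraph G).degree (Sum.inl u) = G.degree u := by
  rw [← card_neighborFinset_eq_degree, Sgraph_neighborFinset_inl, card_map,
    ← card_incidenceFinset_eq_degree, ← card_map (Function.Embedding.subtype _)]
  congr 1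
  ext e
  simp [mem_incidenceFinset, incidenceSet, and_comm]

lemma Sgraph_degree_inr (e : G.edgeSet) : (Sgraph G).degree (Sum.inr e) = 2 := by
  obtain ⟨e, he⟩ := e
  induction e with
  | h a b =>
    have hab : a ≠ b := G.ne_of_adj he
    have hnb : (Sgraph G).neighborFinset (Sum.inr ⟨s(a, b), he⟩) = {Sum.inl a, Sum.inl b} := by
      ext (v | f) <;> rw [mem_neighborFinset] <;> simp [Sgraph]
    rw [← card_neighborFinset_eq_degree, hnb, card_pair (by simpa using hab)]

end Subdivision

theorem Finset.sum_sum_add_pow_three {ι κ R : Type*} [Fintype ι] [Fintype κ] [CommSemiring R]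
    (f : ι → R) (g : κ → R) :
    ∑ i, ∑ j, (f i + g j) ^ 3 =
      Fintype.card κ * ∑ i, f i ^ 3 + 3 * (∑ i, f i ^ 2) * ∑ j, g j +
        3 * (∑ i, f i) * ∑ j, g j ^ 2 + Fintype.card ι * ∑ j, g j ^ 3 := by
  have cube (a b : R) : (a + b) ^ 3 = a ^ 3 + 3 * a ^ 2 * b + 3 * a * b ^ 2 + b ^ 3 := by ring
  simp only [cube, sum_add_distrib, sum_const, card_univ, nsmul_eq_mul, mul_sum, sum_mul,
    ← sum_mul_sum]

theorem Findex_FSum_Sgraph {α β : Type*} [Fintype α] [Fintype β] (G : SimpleGraph α)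
    (H : SimpleGraph β) :
    Findex (FSum (Sgraph G) H) =
      Fintype.card β * Findex G + 6 * #H.edgeFinset * M1 G + 6 * #G.edgeFinset * M1 H +
        Fintype.card α * Findex H + 8 * Fintype.card β * #G.edgeFinset := by
  have degree_inl (u : α) (v : β) :
      (FSum (Sgraph G) H).degree (Sum.inl u, v) = G.degree u + H.degree v := by
    rw [FSum, hierProd_degree, Sgraph_degree_inl, if_pos (Set.mem_range_self u), add_comm]
  have degree_inr (e : G.edgeSet) (v : β) : (FSum (Sgraph G) H).degree (Sum.inr e, v) = 2 := by
    rw [FSum, hierProd_degree, Sgraph_degree_inr, if_neg (by simp), zero_add]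
  rw [Findex, Fintype.sum_prod_type, Fintype.sum_sum_type]
  simp only [degree_inl, degree_inr, Finset.sum_sum_add_pow_three, sum_const, card_univ,
    smul_eq_mul, Nat.cast_id, sum_degrees_eq_twice_card_edges, ← edgeFinset_card, Findex, M1]
  ring

section Path

variable (k : ℕ)

lemma pathGraph_degree_zero : (pathGraph (k + 2)).degree 0 = 1 := by
  rw [← card_neighborFinset_eq_degree, card_eq_one]
  refine ⟨1, ?_⟩
  ext j
  simp only [mem_neighborFinset, pathGraph_adj, mem_singleton, Fin.ext_iff, Fin.val_zero,
    Fin.val_one]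
  omega

lemma pathGraph_degree_last : (pathGraph (k + 2)).degree (Fin.last (k + 1)) = 1 := by
  rw [← card_neighborFinset_eq_degree, card_eq_one]
  refine ⟨Fin.castSucc (Fin.last k), ?_⟩
  ext j
  simp only [mem_neighborFinset, pathGraph_adj, mem_singleton, Fin.ext_iff, Fin.val_last,
    Fin.val_castSucc]
  omega

lemma pathGraph_degree_succ_castSucc (i : Fin k) :
    (pathGraph (k + 2)).degree i.castSucc.succ = 2 := by
  rw [← card_neighborFinset_eq_degree, card_eq_two]
  refine ⟨i.castSucc.castSucc, i.succ.succ, ?_, ?_⟩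
  · simp only [ne_eq, Fin.ext_iff, Fin.val_succ, Fin.val_castSucc]
    omega
  · ext j
    simp only [mem_neighborFinset, pathGraph_adj, mem_insert, mem_singleton, Fin.ext_iff,
      Fin.val_succ, Fin.val_castSucc]
    omega

lemma sum_degree_pow_pathGraph (d : ℕ) :
    ∑ i, (pathGraph (k + 2)).degree i ^ d = k * 2 ^ d + 2 := by
  rw [Fin.sum_univ_succ, Fin.sum_univ_castSucc]
  simp only [pathGraph_degree_zero, pathGraph_degree_succ_castSucc, Fin.succ_last,
    pathGraph_degree_last, one_pow, sum_const, card_univ, Fintype.card_fin, smul_eq_mul]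
  ring

lemma card_edgeFinset_pathGraph : #(pathGraph (k + 2)).edgeFinset = k + 1 := by
  have h := sum_degree_pow_pathGraph k 1
  simp only [pow_one, sum_degrees_eq_twice_card_edges] at h
  omega

end Path

theorem Findex_Ssum_path_path (n m : ℕ) (hn : 2 ≤ n) (hm : 2 ≤ m) :
    (Findex (FSum (Sgraph (pathGraph n)) (pathGraph m)) : ℤ) =
      72 * n * m - 74 * n - 82 * m + 72 := by
  obtain ⟨k, rfl⟩ := Nat.exists_eq_add_of_le' hn
  obtain ⟨l, rfl⟩ := Nat.exists_eq_add_of_le' hm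
  rw [Findex_FSum_Sgraph]
  simp only [Findex, M1, sum_degree_pow_pathGraph, card_edgeFinset_pathGraph, Fintype.card_fin]
  push_cast
  ring
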